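/- (Theorem: null-space concentration, part b) Under the setup of the Schroedinger Eigenmaps minimization (L symmetric PSD, D positive-definite diagonal, V symmetric PSD, 𝓥 = D^{−1/2}VD^{−1/2} with Null(𝓥) ≠ {0} of dimension ≥ n, α > 0), let y^(α) minimize trace(yᵀ(L+αV)y) subject to yᵀDy = I, set z^(α) = D^{1/2} y^(α), and let z^(α)_N be the columnwise orthogonal projection of z^(α) onto Null(𝓥). Then there exists a constant C_2 ≥ 0, independent of α, such that trace((z^(α)_N)ᵀ z^(α)_N) ≥ n − C_2/α. -/

import Mathlib

/-!
Substituting `z = D^{1/2} y` turns the constraint into `zᵀ z = 1` and the potential term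
`tr (yᵀ V y)` into `tr (zᵀ 𝓥 z)`. Comparing the minimiser with the admissible competitor
`D^{-1/2} u`, whose columns `u` are orthonormal in `Null 𝓥`, bounds `α tr (yᵀ V y)` by the
`α`-independent constant `C₁ = tr (uᵀ D^{-1/2} L D^{-1/2} u)`. Writing `𝓥 = Bᵀ B`, the form of
`𝓥` is `‖B v‖²`, which is coercive on `(Null 𝓥)ᗮ` because `B` is injective there. By
Pythagoras, `n - tr (z_Nᵀ z_N)` is the squared norm of the component of `z` orthogonal to
`Null 𝓥`, hence at most `C₁ / (c α)`.
-/

open Matrix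

namespace Matrix

variable {ι κ R : Type*} [Fintype ι]

theorem trace_transpose_mul_mul [Fintype κ] [CommSemiring R] (M : Matrix ι ι R)
    (A : Matrix ι κ R) :
    (Aᵀ * M * A).trace = ∑ j, Aᵀ j ⬝ᵥ M *ᵥ Aᵀ j := by
  rw [Matrix.mul_assoc]
  simp only [trace, diag, mul_apply']
  rfl

theorem trace_transpose_mul_self [Fintype κ] [CommSemiring R] (A : Matrix ι κ R) :
    (Aᵀ * A).trace = ∑ j, Aᵀ j ⬝ᵥ Aᵀ j := by
  classical
  simpa using trace_transpose_mul_mul 1 A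

theorem trace_transpose_mul_add_smul_mul [Fintype κ] (L V : Matrix ι ι ℝ) (α : ℝ)
    (y : Matrix ι κ ℝ) :
    (yᵀ * (L + α • V) * y).trace = (yᵀ * L * y).trace + α * (yᵀ * V * y).trace := by
  simp [Matrix.mul_add, Matrix.add_mul, trace_add, trace_smul]

theorem transpose_mul_mul_mul [CommSemiring R] (P M : Matrix ι ι R) (y : Matrix ι κ R) :
    (P * y)ᵀ * M * (P * y) = yᵀ * (Pᵀ * M * P) * y := by
  simp only [transpose_mul, Matrix.mul_assoc]

theorem mul_mul_mul_mul_cancel [DecidableEq ι] [Semiring R] {P Q : Matrix ι ι R}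
    (hPQ : P * Q = 1) (hQP : Q * P = 1) (M : Matrix ι ι R) : P * (Q * M * Q) * P = M := by
  simp only [← Matrix.mul_assoc, hPQ, Matrix.one_mul]
  rw [Matrix.mul_assoc, hQP, Matrix.mul_one]

theorem PosSemidef.transpose_mul_mul_same [Fintype κ] {A : Matrix ι ι ℝ} (hA : A.PosSemidef)
    (B : Matrix ι κ ℝ) : (Bᵀ * A * B).PosSemidef := by
  simpa [conjTranspose_eq_transpose_of_trivial] using hA.conjTranspose_mul_mul_same B

theorem PosSemidef.mul_trace_le_of_trace_add_smul_le [Fintype κ] {L V : Matrix ι ι ℝ}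
    (hL : L.PosSemidef) {α : ℝ} {y y₀ : Matrix ι κ ℝ}
    (hmin : (yᵀ * (L + α • V) * y).trace ≤ (y₀ᵀ * (L + α • V) * y₀).trace)
    (hy₀ : (y₀ᵀ * V * y₀).trace = 0) :
    α * (yᵀ * V * y).trace ≤ (y₀ᵀ * L * y₀).trace := by
  rw [trace_transpose_mul_add_smul_mul, trace_transpose_mul_add_smul_mul, hy₀] at hmin
  linarith [(hL.transpose_mul_mul_same y).trace_nonneg]

open scoped MatrixOrder in
theorem PosSemidef.exists_eq_transpose_mul_self {A : Matrix ι ι ℝ} (hA : A.PosSemidef) :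
    ∃ B : Matrix ι ι ℝ, A = Bᵀ * B := by
  classical
  obtain ⟨B, rfl⟩ := CStarAlgebra.nonneg_iff_eq_star_mul_self.mp hA.nonneg
  exact ⟨B, by simp [star_eq_conjTranspose]⟩

end Matrix

theorem Submodule.exists_transpose_mul_self_eq_one {ι : Type*} [Fintype ι] {n : ℕ}
    (W : Submodule ℝ (ι → ℝ)) (hn : n ≤ Module.finrank ℝ W) :
    ∃ u : Matrix ι (Fin n) ℝ, uᵀ * u = 1 ∧ ∀ j, uᵀ j ∈ W := by
  let e : (ι → ℝ) ≃ₗ[ℝ] EuclideanSpace ℝ ι := (WithLp.linearEquiv 2 ℝ (ι → ℝ)).symm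
  let W' := W.map (e : (ι → ℝ) →ₗ[ℝ] EuclideanSpace ℝ ι)
  have hn' : n ≤ Module.finrank ℝ W' := by rwa [LinearEquiv.finrank_map_eq]
  let b := stdOrthonormalBasis ℝ W'
  refine ⟨of fun i j => (b (Fin.castLE hn' j) : EuclideanSpace ℝ ι) i, ?_,
    fun j => W.mem_map_equiv.1 (b (Fin.castLE hn' j)).2⟩
  ext j k
  have hb := orthonormal_iff_ite.mp b.orthonormal (Fin.castLE hn' k) (Fin.castLE hn' j)
  rw [Submodule.coe_inner, EuclideanSpace.inner_eq_star_dotProduct, star_trivial] at hb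
  simp only [Fin.castLE_inj, eq_comm] at hb
  rw [mul_apply', one_apply, hb]
  rfl

theorem LinearMap.exists_pos_mul_norm_le_norm_of_mem_orthogonal_ker {𝕜 E F : Type*} [RCLike 𝕜]
    [NormedAddCommGroup E] [InnerProductSpace 𝕜 E] [FiniteDimensional 𝕜 E]
    [NormedAddCommGroup F] [NormedSpace 𝕜 F] (f : E →ₗ[𝕜] F) :
    ∃ c > 0, ∀ v ∈ (LinearMap.ker f)ᗮ, c * ‖v‖ ≤ ‖f v‖ := by
  have hinj : LinearMap.ker (f.domRestrict (LinearMap.ker f)ᗮ) = ⊥ := by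
    rw [LinearMap.ker_eq_bot']
    rintro ⟨v, hv⟩ hfv
    exact Subtype.ext ((LinearMap.ker f).inf_orthogonal_eq_bot.le ⟨hfv, hv⟩)
  obtain ⟨K, -, hK⟩ := (f.domRestrict _).exists_antilipschitzWith hinj
  obtain ⟨c, hc, hcf⟩ := antilipschitzWith_iff_exists_mul_le_norm.mp ⟨K, hK⟩
  exact ⟨c, hc, fun v hv => hcf ⟨v, hv⟩⟩

section Concentration

variable {ι : Type*} [Fintype ι] {A : Matrix ι ι ℝ}

theorem Matrix.PosSemidef.exists_pos_mul_dotProduct_le (hA : A.PosSemidef) :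
    ∃ c > 0, ∀ v : ι → ℝ, (∀ s, A *ᵥ s = 0 → v ⬝ᵥ s = 0) →
      c * (v ⬝ᵥ v) ≤ v ⬝ᵥ A *ᵥ v := by
  classical
  obtain ⟨B, rfl⟩ := hA.exists_eq_transpose_mul_self
  obtain ⟨c, hc, hcB⟩ := (toEuclideanLin B).exists_pos_mul_norm_le_norm_of_mem_orthogonal_ker
  refine ⟨c ^ 2, by positivity, fun v hv => ?_⟩
  have hv' : WithLp.toLp 2 v ∈ (LinearMap.ker (toEuclideanLin B))ᗮ := by
    refine (Submodule.mem_orthogonal' _ _).2 fun s hs => ?_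
    have hBs : B *ᵥ s.ofLp = 0 := congrArg WithLp.ofLp hs
    rw [EuclideanSpace.inner_eq_star_dotProduct, star_trivial, dotProduct_comm]
    exact hv _ (by rw [← mulVec_mulVec, hBs, mulVec_zero])
  have hnorm : ∀ w : ι → ℝ, ‖WithLp.toLp 2 w‖ ^ 2 = w ⬝ᵥ w := fun w => by
    rw [← real_inner_self_eq_norm_sq, EuclideanSpace.inner_eq_star_dotProduct, star_trivial]
  calc c ^ 2 * (v ⬝ᵥ v) = (c * ‖WithLp.toLp 2 v‖) ^ 2 := by rw [mul_pow, hnorm]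
    _ ≤ ‖toEuclideanLin B (WithLp.toLp 2 v)‖ ^ 2 := by gcongr; exact hcB _ hv'
    _ = v ⬝ᵥ (Bᵀ * B) *ᵥ v := by
      change ‖WithLp.toLp 2 (B *ᵥ v)‖ ^ 2 = _
      rw [hnorm, ← mulVec_mulVec, dotProduct_mulVec v, vecMul_transpose]

theorem dotProduct_self_add_of_dotProduct_eq_zero {x w : ι → ℝ} (h : x ⬝ᵥ w = 0) :
    (x + w) ⬝ᵥ (x + w) = x ⬝ᵥ x + w ⬝ᵥ w := by
  rw [add_dotProduct, dotProduct_add, dotProduct_add, h, dotProduct_comm w x, h]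
  ring

theorem Matrix.dotProduct_mulVec_add_of_mulVec_eq_zero (hA : Aᵀ = A) {x w : ι → ℝ}
    (hx : A *ᵥ x = 0) : (x + w) ⬝ᵥ A *ᵥ (x + w) = w ⬝ᵥ A *ᵥ w := by
  rw [mulVec_add, hx, zero_add, add_dotProduct, dotProduct_mulVec x, ← hA, vecMul_transpose, hA,
    hx, zero_dotProduct, zero_add]

theorem Matrix.mul_trace_sub_le_trace_of_mulVec_eq_zero {κ : Type*} [Fintype κ] (hA : Aᵀ = A)
    {c : ℝ} (hc : ∀ v, (∀ s, A *ᵥ s = 0 → v ⬝ᵥ s = 0) → c * (v ⬝ᵥ v) ≤ v ⬝ᵥ A *ᵥ v)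
    {z zN : Matrix ι κ ℝ} (hN : ∀ j, A *ᵥ zNᵀ j = 0)
    (horth : ∀ j s, A *ᵥ s = 0 → (zᵀ j - zNᵀ j) ⬝ᵥ s = 0) :
    c * ((zᵀ * z).trace - (zNᵀ * zN).trace) ≤ (zᵀ * A * z).trace := by
  rw [trace_transpose_mul_self, trace_transpose_mul_self, trace_transpose_mul_mul,
    ← Finset.sum_sub_distrib, Finset.mul_sum]
  refine Finset.sum_le_sum fun j _ => ?_
  have hz : zᵀ j = zNᵀ j + (zᵀ j - zNᵀ j) := (add_sub_cancel _ _).symm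
  have hpyth := dotProduct_self_add_of_dotProduct_eq_zero (x := zNᵀ j) (w := zᵀ j - zNᵀ j)
    (by rw [dotProduct_comm]; exact horth j _ (hN j))
  rw [hz, hpyth, dotProduct_mulVec_add_of_mulVec_eq_zero hA (hN j), add_sub_cancel_left]
  exact hc _ (horth j)

end Concentration

theorem schroedinger_nullspace_concentration_general (m n : ℕ)
    (L : Matrix (Fin m) (Fin m) ℝ) (hL : L.PosSemidef)
    (d : Fin m → ℝ) (hd : ∀ i, 0 < d i)
    (V : Matrix (Fin m) (Fin m) ℝ) (hV : V.PosSemidef)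
    (𝓥 : Matrix (Fin m) (Fin m) ℝ)
    (h𝓥 : 𝓥 = (Matrix.diagonal fun i => (Real.sqrt (d i))⁻¹) * V *
            (Matrix.diagonal fun i => (Real.sqrt (d i))⁻¹))
    (hdim : n ≤ Module.finrank ℝ (LinearMap.ker 𝓥.mulVecLin)) :
    ∃ C₂ : ℝ, 0 ≤ C₂ ∧ ∀ (α : ℝ), 0 < α →
      ∀ (y zN : Matrix (Fin m) (Fin n) ℝ),
        yᵀ * Matrix.diagonal d * y = 1 →
        (∀ y' : Matrix (Fin m) (Fin n) ℝ, y'ᵀ * Matrix.diagonal d * y' = 1 →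
          (yᵀ * (L + α • V) * y).trace ≤ (y'ᵀ * (L + α • V) * y').trace) →
        (∀ j, 𝓥.mulVec (fun i => zN i j) = 0) →
        (∀ j, ∀ s : Fin m → ℝ, 𝓥.mulVec s = 0 →
          (fun i => ((Matrix.diagonal fun i => Real.sqrt (d i)) * y) i j - zN i j) ⬝ᵥ s = 0) →
        (n : ℝ) - C₂ / α ≤ (zNᵀ * zN).trace := by
  set S := diagonal fun i => √(d i)
  set S' := diagonal fun i => (√(d i))⁻¹
  have hsqrt : ∀ i, √(d i) ≠ 0 := fun i => (Real.sqrt_pos.2 (hd i)).ne'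
  have hSS : S * S = diagonal d := by simp [S, Real.mul_self_sqrt (hd _).le]
  have hSS' : S * S' = 1 := by simp [S, S', hsqrt]
  have hS'S : S' * S = 1 := by simp [S, S', hsqrt]
  have hST : Sᵀ = S := diagonal_transpose _
  have hS'T : S'ᵀ = S' := diagonal_transpose _
  have h𝓥psd : 𝓥.PosSemidef := by
    simpa only [hS'T, ← h𝓥] using hV.transpose_mul_mul_same S'
  obtain ⟨u, hu, huker⟩ := (LinearMap.ker 𝓥.mulVecLin).exists_transpose_mul_self_eq_one hdim
  obtain ⟨c, hc, hcoer⟩ := h𝓥psd.exists_pos_mul_dotProduct_le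
  have hu_adm : (S' * u)ᵀ * diagonal d * (S' * u) = 1 := by
    have hS'DS' : S' * diagonal d * S' = 1 := by
      simpa [hSS] using mul_mul_mul_mul_cancel hS'S hSS' 1
    rw [transpose_mul_mul_mul, hS'T, hS'DS', Matrix.mul_one, hu]
  have hu_pot : ((S' * u)ᵀ * V * (S' * u)).trace = 0 := by
    rw [transpose_mul_mul_mul, hS'T, ← h𝓥, trace_transpose_mul_mul]
    exact Finset.sum_eq_zero fun j _ => by rw [show 𝓥 *ᵥ uᵀ j = 0 from huker j, dotProduct_zero]
  refine ⟨((S' * u)ᵀ * L * (S' * u)).trace / c,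
    div_nonneg (hL.transpose_mul_mul_same _).trace_nonneg hc.le,
    fun α hα y zN hy hmin hN horth => ?_⟩
  have hz : (S * y)ᵀ * (S * y) = 1 := by
    rw [← Matrix.mul_one (S * y)ᵀ, transpose_mul_mul_mul, hST, Matrix.mul_one, hSS, hy]
  have hpot : (S * y)ᵀ * 𝓥 * (S * y) = yᵀ * V * y := by
    rw [transpose_mul_mul_mul, hST, h𝓥, mul_mul_mul_mul_cancel hSS' hS'S]
  have henergy := hL.mul_trace_le_of_trace_add_smul_le (hmin _ hu_adm) hu_pot
  have hconc := mul_trace_sub_le_trace_of_mulVec_eq_zero (A := 𝓥) h𝓥psd.isHermitian hcoer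
    (z := S * y) hN horth
  rw [hz, trace_one, Fintype.card_fin, hpot] at hconc
  rw [div_div, sub_le_comm, le_div_iff₀ (by positivity)]
  nlinarith [mul_le_mul_of_nonneg_left hconc hα.le]

theorem schroedinger_nullspace_concentration (m n : ℕ)
    (L : Matrix (Fin m) (Fin m) ℝ) (hL : L.PosSemidef)
    (d : Fin m → ℝ) (hd : ∀ i, 0 < d i)
    (V : Matrix (Fin m) (Fin m) ℝ) (hV : V.PosSemidef)
    (𝓥 : Matrix (Fin m) (Fin m) ℝ)
    (h𝓥 : 𝓥 = (Matrix.diagonal fun i => (Real.sqrt (d i))⁻¹) * V *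
            (Matrix.diagonal fun i => (Real.sqrt (d i))⁻¹))
    (hker : LinearMap.ker 𝓥.mulVecLin ≠ ⊥)
    (hdim : n ≤ Module.finrank ℝ (LinearMap.ker 𝓥.mulVecLin)) :
    ∃ C₂ : ℝ, 0 ≤ C₂ ∧ ∀ (α : ℝ), 0 < α →
      ∀ (y zN : Matrix (Fin m) (Fin n) ℝ),
        yᵀ * Matrix.diagonal d * y = 1 →
        (∀ y' : Matrix (Fin m) (Fin n) ℝ, y'ᵀ * Matrix.diagonal d * y' = 1 →
          (yᵀ * (L + α • V) * y).trace ≤ (y'ᵀ * (L + α • V) * y').trace) →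
        (∀ j, 𝓥.mulVec (fun i => zN i j) = 0) →
        (∀ j, ∀ s : Fin m → ℝ, 𝓥.mulVec s = 0 →
          (fun i => ((Matrix.diagonal fun i => Real.sqrt (d i)) * y) i j - zN i j) ⬝ᵥ s = 0) →
        (n : ℝ) - C₂ / α ≤ (zNᵀ * zN).trace :=
  schroedinger_nullspace_concentration_general m n L hL d hd V hV 𝓥 h𝓥 hdim
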